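/- The map D : (b₁, c₀, c₁) ↦ (1 - b₁, -c₁/(1+c₁), -c₀/(1+c₀)) is an involution on the set {(b₁,c₀,c₁) ∈ ℝ³ : 0 < b₁ < 1, b₁ - 1 < c₀ < (1-b₁)/b₁, -b₁ < c₁ < b₁/(1-b₁)}, i.e., D maps this set to itself and D∘D is the identity. -/

import Mathlib

/-- The parameter region (Cond) of the paper. -/
def condSet : Set (ℝ × ℝ × ℝ) :=
  {p | 0 < p.1 ∧ p.1 < 1 ∧ p.1 - 1 < p.2.1 ∧ p.2.1 < (1 - p.1) / p.1 ∧
    -p.1 < p.2.2 ∧ p.2.2 < p.1 / (1 - p.1)}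

/-- The dual-matrices map `D`. -/
noncomputable def dualMap (p : ℝ × ℝ × ℝ) : ℝ × ℝ × ℝ :=
  (1 - p.1, -p.2.2 / (1 + p.2.2), -p.2.1 / (1 + p.2.1))

/-!
Both coordinates `c₀, c₁` are transformed by the Möbius map `φ c = -c / (1 + c)`, an involution of
`(-1, ∞)`. It is decreasing there and swaps the endpoints `b - 1` and `(1 - b) / b` of
`J b = (b - 1, (1 - b) / b)`, so it maps `J b` onto itself. The region is
`{0 < b < 1, c₀ ∈ J b, c₁ ∈ J (1 - b)}`, and `D` replaces `b` by `1 - b` while swapping the roles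
of `c₀` and `c₁`, so it preserves the region.
-/

open Set

def paramInterval (b : ℝ) : Set ℝ := Ioo (b - 1) ((1 - b) / b)

theorem mem_condSet_iff {b c₀ c₁ : ℝ} :
    (b, c₀, c₁) ∈ condSet ↔ b ∈ Ioo 0 1 ∧ c₀ ∈ paramInterval b ∧ c₁ ∈ paramInterval (1 - b) := by
  simp only [condSet, paramInterval, mem_ofPred_eq, mem_Ioo, sub_sub_cancel, sub_sub_cancel_left,
    and_assoc]

theorem dualMap_mk (b c₀ c₁ : ℝ) :
    dualMap (b, c₀, c₁) = (1 - b, -c₁ / (1 + c₁), -c₀ / (1 + c₀)) := rfl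

theorem one_add_pos_of_mem_paramInterval {b c : ℝ} (hb : 0 < b) (hc : c ∈ paramInterval b) :
    0 < 1 + c := by
  linarith [hc.1]

theorem neg_div_one_add_neg_div_one_add {c : ℝ} (hc : 1 + c ≠ 0) :
    -(-c / (1 + c)) / (1 + -c / (1 + c)) = c := by
  have h : 1 + -c / (1 + c) = 1 / (1 + c) := by field_simp; ring
  rw [h]
  field_simp

theorem neg_div_one_add_mem_paramInterval {b c : ℝ} (hb : 0 < b)
    (hc : c ∈ paramInterval b) : -c / (1 + c) ∈ paramInterval b := by
  have hc1 := one_add_pos_of_mem_paramInterval hb hc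
  obtain ⟨hcl, hcr⟩ := hc
  rw [lt_div_iff₀ hb] at hcr
  constructor
  · rw [lt_div_iff₀ hc1]; nlinarith
  · rw [div_lt_div_iff₀ hc1 hb]; nlinarith

/-- `D` is an involution on the region (Cond). -/
theorem dualMap_involution :
    ∀ p ∈ condSet, dualMap p ∈ condSet ∧ dualMap (dualMap p) = p := by
  rintro ⟨b, c₀, c₁⟩ hp
  obtain ⟨hb, hc₀, hc₁⟩ := mem_condSet_iff.mp hp
  have hb' : 1 - b ∈ Ioo 0 1 := ⟨sub_pos.mpr hb.2, sub_lt_self 1 hb.1⟩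
  rw [dualMap_mk, dualMap_mk, mem_condSet_iff, sub_sub_cancel]
  refine ⟨⟨hb', neg_div_one_add_mem_paramInterval hb'.1 hc₁,
    neg_div_one_add_mem_paramInterval hb.1 hc₀⟩, ?_⟩
  rw [neg_div_one_add_neg_div_one_add (one_add_pos_of_mem_paramInterval hb.1 hc₀).ne',
    neg_div_one_add_neg_div_one_add (one_add_pos_of_mem_paramInterval hb'.1 hc₁).ne']
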